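/- Let A_Y = diag_C(A, 0) be a selfadjoint diagonal twisted 1-form, i.e. A = diag_s(A_r, A_l) (trivial on ṡ) with, on each lepto-colour block I, A_r = [[0, conj(𝗄^I)·H_r†],[H_r·𝗄^I, 0]] and A_l = [[0, conj(𝗄^I)·H_l†],[H_l·𝗄^I, 0]] for quaternionic matrices H_r, H_l. Then J·A_Y·J⁻¹ = diag_C(0, conj(A)), and hence the diagonal twisted fluctuation is D_{A_Y} := γ⁵⊗D_Y + A_Y + J·A_Y·J⁻¹ = diag_C(η⊗D₀ + A, η⊗D₀† + conj(A)); in particular D_{A_Y} is Hermitian. -/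

import Mathlib

/-!
`K = ξ ⊗ Khalf` exchanges the two `C`-blocks and satisfies `conj K = −K`, so
`J·diag_C(A, 0)·J⁻¹ = diag_C(0, Khalf·conj(A)·Khalf)`. Here `Khalf = diag_s(−σ₂, σ₂) ⊗ I` acts
only on `ṡ`, whereas `A` is diagonal in `s` and trivial on `ṡ`; hence they commute and `Khalf² = 1`
leaves `conj A`. For hermiticity, `𝗄^I` is diagonal, so `conj 𝗄^I = (𝗄^I)†` and every block
`[[0, conj(𝗄^I)·H†], [H·𝗄^I, 0]]` (and likewise `D₀^I`) has the form `[[0, B†], [B, 0]]`;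
entrywise conjugation preserves hermiticity.
-/

open Matrix

noncomputable section

namespace TwistSM

/-! ### Dirac matrices -/

def pauli1 : Matrix (Fin 2) (Fin 2) ℂ := !![0, 1; 1, 0]
def pauli2 : Matrix (Fin 2) (Fin 2) ℂ := !![0, -Complex.I; Complex.I, 0]
def pauli3 : Matrix (Fin 2) (Fin 2) ℂ := !![1, 0; 0, -1]

/-- σ^μ = (I₂, −iσ₁, −iσ₂, −iσ₃) -/
def sigE : Fin 4 → Matrix (Fin 2) (Fin 2) ℂ :=
  ![1, (-Complex.I) • pauli1, (-Complex.I) • pauli2, (-Complex.I) • pauli3]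
/-- σ̃^μ = (I₂, iσ₁, iσ₂, iσ₃) -/
def sigTE : Fin 4 → Matrix (Fin 2) (Fin 2) ℂ :=
  ![1, Complex.I • pauli1, Complex.I • pauli2, Complex.I • pauli3]

/-- Diagonal 2×2 block matrix [[A,0],[0,B]] over a leading `Fin 2` index. -/
def dgB {m : Type} (A B : Matrix m m ℂ) : Matrix (Fin 2 × m) (Fin 2 × m) ℂ :=
  Matrix.of fun p q =>
    if p.1 = q.1 then (if p.1 = 0 then A p.2 q.2 else B p.2 q.2) else 0

/-- Off-diagonal 2×2 block matrix [[0,A],[B,0]] over a leading `Fin 2` index. -/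
def odB {m : Type} (A B : Matrix m m ℂ) : Matrix (Fin 2 × m) (Fin 2 × m) ℂ :=
  Matrix.of fun p q =>
    if p.1 = 0 then (if q.1 = 0 then 0 else A p.2 q.2)
    else (if q.1 = 0 then B p.2 q.2 else 0)

/-- Euclidean Dirac matrices γ^μ_E = [[0, σ^μ],[σ̃^μ, 0]], acting on the spinor
indices (s, ṡ). -/
def gammaE (μ : Fin 4) : Matrix (Fin 2 × Fin 2) (Fin 2 × Fin 2) ℂ := odB (sigE μ) (sigTE μ)

/-- Entrywise complex conjugation of a matrix. -/
def mconj {m n : Type} (A : Matrix m n ℂ) : Matrix m n ℂ := A.map (starRingEnd ℂ)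

/-- C = i γ⁰_E γ²_E (the matrix part of the charge conjugation 𝒥 = C ∘ cc). -/
def Kspin : Matrix (Fin 2 × Fin 2) (Fin 2 × Fin 2) ℂ := Complex.I • (gammaE 0 * gammaE 2)

/-! ### The twisted algebra and its representation on ℂ¹²⁸ -/

/-- Quaternionic 2×2 matrices: of the form [[α,β],[−conj β, conj α]]. -/
def IsQuat (q : Matrix (Fin 2) (Fin 2) ℂ) : Prop :=
  q 1 0 = -(starRingEnd ℂ) (q 0 1) ∧ q 1 1 = (starRingEnd ℂ) (q 0 0)

/-- An element (c, c', q, q', m, m') of the twisted algebra. -/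
structure Alg : Type where
  c : ℂ
  c' : ℂ
  q : Matrix (Fin 2) (Fin 2) ℂ
  q' : Matrix (Fin 2) (Fin 2) ℂ
  m : Matrix (Fin 3) (Fin 3) ℂ
  m' : Matrix (Fin 3) (Fin 3) ℂ
  hq : IsQuat q
  hq' : IsQuat q'

/-- The twist ρ: exchange primed and unprimed entries. -/
def Alg.rho (a : Alg) : Alg := ⟨a.c', a.c, a.q', a.q, a.m', a.m, a.hq', a.hq⟩

/-- Flavour index α, as a pair (flavour pair, index within the pair):
(0,0) = 1̇, (0,1) = 2̇, (1,0) = 1, (1,1) = 2. -/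
abbrev Flav : Type := Fin 2 × Fin 2
/-- Internal index (I, α): lepto-colour I ∈ Fin 4 and flavour α. -/
abbrev Intl : Type := Fin 4 × Flav
/-- (ṡ, (I, α)) -/
abbrev HalfNoS : Type := Fin 2 × Intl
/-- Half of the full space: (s, ṡ, (I, α)). -/
abbrev Half : Type := Fin 2 × HalfNoS
/-- ℂ¹²⁸, indexed by (C, s, ṡ, (I, α)). -/
abbrev Full : Type := Fin 2 × Half

/-- diag(c, conj c) as a 2×2 matrix. -/
def cdiag (c : ℂ) : Matrix (Fin 2) (Fin 2) ℂ := Matrix.diagonal ![c, (starRingEnd ℂ) c]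

def pred3 (i : Fin 4) : Fin 3 := ⟨i.val - 1, by have := i.isLt; omega⟩

/-- diag(c, m) as a 4×4 matrix on the lepto-colour index. -/
def sm4 (c : ℂ) (m : Matrix (Fin 3) (Fin 3) ℂ) : Matrix (Fin 4) (Fin 4) ℂ :=
  Matrix.of fun i j =>
    if i = 0 then (if j = 0 then c else 0)
    else if j = 0 then 0 else m (pred3 i) (pred3 j)

/-- Q_r = diag(c, conj c, q') on the flavour index. -/
def Qr (a : Alg) : Matrix Flav Flav ℂ := dgB (cdiag a.c) a.q'
/-- Q_l = diag(c', conj c', q) on the flavour index. -/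
def Ql (a : Alg) : Matrix Flav Flav ℂ := dgB (cdiag a.c') a.q

/-- diag_α(A⊗I₂, B⊗I₂) on (I, α). -/
def msect (A B : Matrix (Fin 4) (Fin 4) ℂ) : Matrix Intl Intl ℂ :=
  Matrix.of fun p q =>
    if p.2 = q.2 then (if p.2.1 = 0 then A p.1 q.1 else B p.1 q.1) else 0

/-- M_r = diag_α(𝗆⊗I₂, 𝗆'⊗I₂). -/
def Mr (a : Alg) : Matrix Intl Intl ℂ := msect (sm4 a.c a.m) (sm4 a.c' a.m')
/-- M_l = diag_α(𝗆'⊗I₂, 𝗆⊗I₂). -/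
def Ml (a : Alg) : Matrix Intl Intl ℂ := msect (sm4 a.c' a.m') (sm4 a.c a.m)

/-- Lift a flavour matrix to (ṡ, (I, α)), acting trivially on ṡ and I. -/
def liftQ (X : Matrix Flav Flav ℂ) : Matrix HalfNoS HalfNoS ℂ :=
  Matrix.of fun p q => if p.1 = q.1 ∧ p.2.1 = q.2.1 then X p.2.2 q.2.2 else 0

/-- Lift a matrix on (I, α) to (ṡ, (I, α)), acting trivially on ṡ. -/
def liftI (X : Matrix Intl Intl ℂ) : Matrix HalfNoS HalfNoS ℂ :=
  Matrix.of fun p q => if p.1 = q.1 then X p.2 q.2 else 0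

/-- The Q-block of the representation: diag_s(Q_r, Q_l), trivial on ṡ and I. -/
def Qmat (a : Alg) : Matrix Half Half ℂ := dgB (liftQ (Qr a)) (liftQ (Ql a))
/-- The M-block of the representation: diag_s(M_r, M_l), trivial on ṡ. -/
def Mmat (a : Alg) : Matrix Half Half ℂ := dgB (liftI (Mr a)) (liftI (Ml a))

/-- The representation π(a) = diag_C(Q, M) of the twisted algebra on ℂ¹²⁸. -/
def rep (a : Alg) : Matrix Full Full ℂ := dgB (Qmat a) (Mmat a)

/-- Twisted commutator [T, π(b)]_ρ = T·π(b) − π(ρ(b))·T. -/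
def tcomm (T : Matrix Full Full ℂ) (b : Alg) : Matrix Full Full ℂ :=
  T * rep b - rep b.rho * T

/-- K = (i γ⁰_E γ²_E) ⊗ ξ ⊗ I₁₆ (with ξ on the internal index C);
the real structure is J = K ∘ cc. -/
def Kmat : Matrix Full Full ℂ :=
  Matrix.of fun p q =>
    (!![0, 1; 1, 0] : Matrix (Fin 2) (Fin 2) ℂ) p.1 q.1 *
      Kspin (p.2.1, p.2.2.1) (q.2.1, q.2.2.1) *
      (if p.2.2.2 = q.2.2.2 then 1 else 0)

/-- J T J⁻¹ = −K · conj(T) · conj(K) as a matrix operation. -/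
def Jconj (T : Matrix Full Full ℂ) : Matrix Full Full ℂ := -(Kmat * mconj T * mconj Kmat)

/-! ### Yukawa and Majorana parts of the Dirac operator -/

/-- 𝗄^I = diag(k_u^I, k_d^I). -/
def kdiag (kν ke ku kd : ℂ) (i : Fin 4) : Matrix (Fin 2) (Fin 2) ℂ :=
  if i = 0 then Matrix.diagonal ![kν, ke] else Matrix.diagonal ![ku, kd]

/-- Block-diagonal matrix on (I, α) from a family of flavour matrices. -/
def diagI (F : Fin 4 → Matrix Flav Flav ℂ) : Matrix Intl Intl ℂ :=
  Matrix.of fun p q => if p.1 = q.1 then F p.1 p.2 q.2 else 0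

/-- The Yukawa mass matrix D₀ = diag_I(D₀^I), D₀^I = [[0, conj 𝗄^I],[𝗄^I, 0]]. -/
def D0 (kν ke ku kd : ℂ) : Matrix Intl Intl ℂ :=
  diagI fun i => odB (mconj (kdiag kν ke ku kd i)) (kdiag kν ke ku kd i)

/-- η ⊗ X, with η = diag_s(1,−1) ⊗ I₂ on (s, ṡ) and X on (I, α). -/
def etaD (X : Matrix Intl Intl ℂ) : Matrix Half Half ℂ := dgB (liftI X) (liftI (-X))

/-- γ⁵ ⊗ D_Y = diag_C(η⊗D₀, η⊗D₀†). -/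
def g5DY (kν ke ku kd : ℂ) : Matrix Full Full ℂ :=
  dgB (etaD (D0 kν ke ku kd)) (etaD ((D0 kν ke ku kd)ᴴ))

/-- Ξ = diag(1,0,0,0)_I ⊗ diag(1,0,0,0)_α on (I, α). -/
def XiI : Matrix Intl Intl ℂ :=
  Matrix.of fun p q =>
    if p = q ∧ p.1 = 0 ∧ p.2 = ((0 : Fin 2), (0 : Fin 2)) then 1 else 0

/-- γ⁵ ⊗ D_M = [[0, η⊗D_R],[η⊗D_R†, 0]]_C with D_R = k_R Ξ. -/
def g5DM (kR : ℂ) : Matrix Full Full ℂ :=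
  odB (etaD (kR • XiI)) (etaD ((kR • XiI)ᴴ))

/-! ### The free 1-form -/

/-- Lift a spinor matrix (on (s, ṡ)) to ℂ¹²⁸, identity on C and (I, α). -/
def liftSpin (G : Matrix (Fin 2 × Fin 2) (Fin 2 × Fin 2) ℂ) : Matrix Full Full ℂ :=
  Matrix.of fun p q =>
    (if p.1 = q.1 ∧ p.2.2.2 = q.2.2.2 then 1 else 0) * G (p.2.1, p.2.2.1) (q.2.1, q.2.2.1)

/-- Q_μ = diag_s(Q^r_μ, Q^l_μ), Q^{r/l}_μ = diag(c^{r/l}, conj c^{r/l}, q^{r/l}),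
trivial on ṡ and I. -/
def freeQ (cr cl : ℂ) (qr ql : Matrix (Fin 2) (Fin 2) ℂ) : Matrix Half Half ℂ :=
  dgB (liftQ (dgB (cdiag cr) qr)) (liftQ (dgB (cdiag cl) ql))

/-- M_μ = diag_s(M^r_μ, M^l_μ), M^r_μ = diag_α(𝗆^r⊗I₂, 𝗆^l⊗I₂), 𝗆^{r/l} = diag(c^{r/l}, m^{r/l}),
trivial on ṡ. -/
def freeM (cr cl : ℂ) (mr ml : Matrix (Fin 3) (Fin 3) ℂ) : Matrix Half Half ℂ :=
  dgB (liftI (msect (sm4 cr mr) (sm4 cl ml))) (liftI (msect (sm4 cl ml) (sm4 cr mr)))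

/-- The free 1-form coefficient matrix A_μ = diag_C(Q_μ, M_μ). -/
def freeA (cr cl : ℂ) (qr ql : Matrix (Fin 2) (Fin 2) ℂ)
    (mr ml : Matrix (Fin 3) (Fin 3) ℂ) : Matrix Full Full ℂ :=
  dgB (freeQ cr cl qr ql) (freeM cr cl mr ml)

/-! ### Partial derivatives -/

/-- Partial derivative in the μ-th coordinate direction of ℝ⁴ (ℂ-valued). -/
def pdC (μ : Fin 4) (f : (Fin 4 → ℝ) → ℂ) (x : Fin 4 → ℝ) : ℂ :=
  fderiv ℝ f x (Pi.single μ 1)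

/-- Partial derivative in the μ-th coordinate direction of ℝ⁴ (ℝ-valued). -/
def pdR (μ : Fin 4) (f : (Fin 4 → ℝ) → ℝ) (x : Fin 4 → ℝ) : ℝ :=
  fderiv ℝ f x (Pi.single μ 1)

/-- Entrywise partial derivative of a matrix-valued function. -/
def pdM {m n : Type} (μ : Fin 4) (F : (Fin 4 → ℝ) → Matrix m n ℂ) (x : Fin 4 → ℝ) :
    Matrix m n ℂ :=
  Matrix.of fun i j => pdC μ (fun y => F y i j) x

open scoped Kronecker

section Blocks

variable {m : Type}

lemma dgB_add (A B C D : Matrix m m ℂ) : dgB A B + dgB C D = dgB (A + C) (B + D) := by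
  ext ⟨i, p⟩ ⟨j, q⟩
  fin_cases i <;> fin_cases j <;> simp [dgB]

lemma dgB_mul [Fintype m] (A B C D : Matrix m m ℂ) :
    dgB A B * dgB C D = dgB (A * C) (B * D) := by
  ext ⟨i, p⟩ ⟨j, q⟩
  rw [mul_apply, Fintype.sum_prod_type, Fin.sum_univ_two]
  fin_cases i <;> fin_cases j <;> simp [dgB, mul_apply]

lemma odB_mul_dgB [Fintype m] (A B C D : Matrix m m ℂ) :
    odB A B * dgB C D = odB (A * D) (B * C) := by
  ext ⟨i, p⟩ ⟨j, q⟩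
  rw [mul_apply, Fintype.sum_prod_type, Fin.sum_univ_two]
  fin_cases i <;> fin_cases j <;> simp [dgB, odB, mul_apply]

lemma odB_mul_odB [Fintype m] (A B C D : Matrix m m ℂ) :
    odB A B * odB C D = dgB (A * D) (B * C) := by
  ext ⟨i, p⟩ ⟨j, q⟩
  rw [mul_apply, Fintype.sum_prod_type, Fin.sum_univ_two]
  fin_cases i <;> fin_cases j <;> simp [dgB, odB, mul_apply]

lemma dgB_one [DecidableEq m] : dgB (1 : Matrix m m ℂ) 1 = 1 := by
  ext ⟨i, p⟩ ⟨j, q⟩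
  fin_cases i <;> fin_cases j <;> simp [dgB, one_apply]

lemma conjTranspose_dgB (A B : Matrix m m ℂ) : (dgB A B)ᴴ = dgB Aᴴ Bᴴ := by
  ext ⟨i, p⟩ ⟨j, q⟩
  fin_cases i <;> fin_cases j <;> simp [dgB, conjTranspose_apply]

lemma conjTranspose_odB (A B : Matrix m m ℂ) : (odB A B)ᴴ = odB Bᴴ Aᴴ := by
  ext ⟨i, p⟩ ⟨j, q⟩
  fin_cases i <;> fin_cases j <;> simp [odB, conjTranspose_apply]

lemma mconj_dgB (A B : Matrix m m ℂ) : mconj (dgB A B) = dgB (mconj A) (mconj B) := by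
  ext ⟨i, p⟩ ⟨j, q⟩
  fin_cases i <;> fin_cases j <;> simp [mconj, dgB]

lemma isHermitian_dgB {A B : Matrix m m ℂ} (hA : A.IsHermitian) (hB : B.IsHermitian) :
    (dgB A B).IsHermitian := by
  rw [IsHermitian, conjTranspose_dgB, hA.eq, hB.eq]

lemma isHermitian_odB_conjTranspose (B : Matrix m m ℂ) : (odB Bᴴ B).IsHermitian := by
  rw [IsHermitian, conjTranspose_odB, conjTranspose_conjTranspose]

end Blocks

section Conjugation

variable {n : Type}

lemma mconj_zero : mconj (0 : Matrix n n ℂ) = 0 :=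
  Matrix.map_zero _ (map_zero _)

lemma isHermitian_mconj {A : Matrix n n ℂ} (hA : A.IsHermitian) : (mconj A).IsHermitian :=
  hA.map _ fun _ => rfl

lemma conjTranspose_eq_mconj_of_isSymm {A : Matrix n n ℂ} (hA : A.IsSymm) : Aᴴ = mconj A := by
  change mconj Aᵀ = mconj A
  rw [hA.eq]

end Conjugation

lemma liftI_eq_one_kronecker (X : Matrix Intl Intl ℂ) : liftI X = 1 ⊗ₖ X := by
  ext ⟨a, p⟩ ⟨b, q⟩
  by_cases h : a = b <;> simp [liftI, one_apply, h]

lemma mconj_liftI (X : Matrix Intl Intl ℂ) : mconj (liftI X) = liftI (mconj X) := by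
  ext ⟨a, p⟩ ⟨b, q⟩
  by_cases h : a = b <;> simp [mconj, liftI, h]

lemma isHermitian_liftI {X : Matrix Intl Intl ℂ} (hX : X.IsHermitian) :
    (liftI X).IsHermitian := by
  rw [liftI_eq_one_kronecker, IsHermitian, conjTranspose_kronecker, conjTranspose_one, hX.eq]

lemma isHermitian_etaD {X : Matrix Intl Intl ℂ} (hX : X.IsHermitian) : (etaD X).IsHermitian :=
  isHermitian_dgB (isHermitian_liftI hX) (isHermitian_liftI hX.neg)

lemma isHermitian_diagI {F : Fin 4 → Matrix Flav Flav ℂ} (hF : ∀ i, (F i).IsHermitian) :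
    (diagI F).IsHermitian := by
  ext ⟨a, p⟩ ⟨b, q⟩
  by_cases h : a = b
  · subst h
    simpa [diagI, conjTranspose_apply] using (hF a).apply p q
  · simp [diagI, conjTranspose_apply, h, Ne.symm h]

lemma pauli2_mul_self : pauli2 * pauli2 = 1 := by
  ext i j
  fin_cases i <;> fin_cases j <;> simp [pauli2, mul_apply, Fin.sum_univ_two]

lemma Kspin_eq_dgB : Kspin = dgB (-pauli2) pauli2 := by
  ext ⟨s, t⟩ ⟨s', t'⟩
  fin_cases s <;> fin_cases s' <;> fin_cases t <;> fin_cases t' <;>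
    simp [Kspin, gammaE, odB, sigE, sigTE, pauli1, pauli2, pauli3, dgB,
      mul_apply, Fintype.sum_prod_type, Fin.sum_univ_two]

lemma mconj_Kspin : mconj Kspin = -Kspin := by
  rw [Kspin_eq_dgB]
  ext ⟨s, t⟩ ⟨s', t'⟩
  fin_cases s <;> fin_cases s' <;> fin_cases t <;> fin_cases t' <;> simp [mconj, dgB, pauli2]

/-- `Kspin ⊗ I₁₆` on one `C`-block, so that `Kmat = ξ ⊗ Khalf`. -/
def Khalf : Matrix Half Half ℂ := dgB ((-pauli2) ⊗ₖ 1) (pauli2 ⊗ₖ 1)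

lemma Kmat_eq_odB : Kmat = odB Khalf Khalf := by
  ext ⟨c, s, t, x⟩ ⟨c', s', t', x'⟩
  fin_cases c <;> fin_cases c' <;> fin_cases s <;> fin_cases s' <;>
    simp [Kmat, Kspin_eq_dgB, Khalf, odB, dgB, one_apply, mul_comm]

lemma mconj_Kmat : mconj Kmat = -Kmat := by
  ext ⟨c, s, t, x⟩ ⟨c', s', t', x'⟩
  have h := congr_fun₂ mconj_Kspin (s, t) (s', t')
  simp only [mconj, map_apply, Matrix.neg_apply] at h
  fin_cases c <;> fin_cases c' <;> by_cases hx : x = x' <;> simp [Kmat, mconj, h, hx]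

lemma Khalf_mul_self : Khalf * Khalf = 1 := by
  rw [Khalf, dgB_mul, ← mul_kronecker_mul, ← mul_kronecker_mul, neg_mul_neg, pauli2_mul_self,
    one_mul, one_kronecker_one, dgB_one]

lemma commute_Khalf_dgB_liftI (X Y : Matrix Intl Intl ℂ) :
    Commute Khalf (dgB (liftI X) (liftI Y)) := by
  have h : ∀ (g : Matrix (Fin 2) (Fin 2) ℂ) (Z : Matrix Intl Intl ℂ),
      Commute (g ⊗ₖ 1) (liftI Z) := fun g Z => by
    rw [liftI_eq_one_kronecker, Commute, SemiconjBy, ← mul_kronecker_mul, ← mul_kronecker_mul,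
      mul_one, one_mul, mul_one, one_mul]
  rw [Khalf, Commute, SemiconjBy, dgB_mul, dgB_mul, (h _ X).eq, (h _ Y).eq]

lemma Jconj_dgB_zero (A : Matrix Half Half ℂ) :
    Jconj (dgB A 0) = dgB 0 (Khalf * mconj A * Khalf) := by
  rw [Jconj, mconj_Kmat, mconj_dgB, mconj_zero, mul_neg, neg_neg, Kmat_eq_odB, odB_mul_dgB,
    odB_mul_odB, mul_zero, zero_mul]

lemma Jconj_dgB_liftI_zero (X Y : Matrix Intl Intl ℂ) :
    Jconj (dgB (dgB (liftI X) (liftI Y)) 0) = dgB 0 (mconj (dgB (liftI X) (liftI Y))) := by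
  have hcomm := commute_Khalf_dgB_liftI (mconj X) (mconj Y)
  rw [Jconj_dgB_zero, mconj_dgB, mconj_liftI, mconj_liftI, hcomm.eq, mul_assoc, Khalf_mul_self,
    mul_one]

lemma conjTranspose_kdiag (kν ke ku kd : ℂ) (i : Fin 4) :
    (kdiag kν ke ku kd i)ᴴ = mconj (kdiag kν ke ku kd i) := by
  apply conjTranspose_eq_mconj_of_isSymm
  unfold kdiag
  split_ifs <;> exact isSymm_diagonal _

lemma isHermitian_D0 (kν ke ku kd : ℂ) : (D0 kν ke ku kd).IsHermitian := by
  unfold D0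
  simp only [← conjTranspose_kdiag]
  exact isHermitian_diagI fun _ => isHermitian_odB_conjTranspose _

/-- The blocks `A_r` (for `H = H_r`) and `A_l` (for `H = H_l`) of the diagonal twisted 1-form. -/
def yukawaForm (kν ke ku kd : ℂ) (H : Matrix (Fin 2) (Fin 2) ℂ) : Matrix Intl Intl ℂ :=
  diagI fun I => odB (mconj (kdiag kν ke ku kd I) * Hᴴ) (H * kdiag kν ke ku kd I)

lemma isHermitian_yukawaForm (kν ke ku kd : ℂ) (H : Matrix (Fin 2) (Fin 2) ℂ) :
    (yukawaForm kν ke ku kd H).IsHermitian := by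
  unfold yukawaForm
  simp only [← conjTranspose_kdiag, ← conjTranspose_mul]
  exact isHermitian_diagI fun _ => isHermitian_odB_conjTranspose _

theorem statement7_general (kν ke ku kd : ℂ) (Hr Hl : Matrix (Fin 2) (Fin 2) ℂ) :
    let Ad : Matrix Half Half ℂ := dgB
        (liftI (diagI fun I =>
          odB (mconj (kdiag kν ke ku kd I) * Hrᴴ) (Hr * kdiag kν ke ku kd I)))
        (liftI (diagI fun I =>
          odB (mconj (kdiag kν ke ku kd I) * Hlᴴ) (Hl * kdiag kν ke ku kd I)))
    let AY : Matrix Full Full ℂ := dgB Ad (0 : Matrix Half Half ℂ)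
    Jconj AY = dgB (0 : Matrix Half Half ℂ) (mconj Ad) ∧
    g5DY kν ke ku kd + AY + Jconj AY
      = dgB (etaD (D0 kν ke ku kd) + Ad) (etaD ((D0 kν ke ku kd)ᴴ) + mconj Ad) ∧
    (g5DY kν ke ku kd + AY + Jconj AY).IsHermitian := by
  intro Ad AY
  have hJ : Jconj AY = dgB 0 (mconj Ad) := Jconj_dgB_liftI_zero _ _
  have hsum : g5DY kν ke ku kd + AY + Jconj AY
      = dgB (etaD (D0 kν ke ku kd) + Ad) (etaD ((D0 kν ke ku kd)ᴴ) + mconj Ad) := by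
    rw [hJ, g5DY, dgB_add, dgB_add, add_zero, add_zero]
  have hAd : Ad.IsHermitian := isHermitian_dgB
    (isHermitian_liftI (isHermitian_yukawaForm kν ke ku kd Hr))
    (isHermitian_liftI (isHermitian_yukawaForm kν ke ku kd Hl))
  have hD0 := isHermitian_D0 kν ke ku kd
  refine ⟨hJ, hsum, ?_⟩
  rw [hsum, hD0.eq]
  exact isHermitian_dgB ((isHermitian_etaD hD0).add hAd)
    ((isHermitian_etaD hD0).add (isHermitian_mconj hAd))

/-- for a selfadjoint diagonal twisted 1-form A_Y parametrized by quaternionic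
H_r, H_l, one has J·A_Y·J⁻¹ = diag_C(0, conj A), hence the diagonal twisted fluctuation is
D_{A_Y} = diag_C(η⊗D₀ + A, η⊗D₀† + conj A); in particular D_{A_Y} is Hermitian. -/
theorem statement7 (kν ke ku kd : ℂ) (Hr Hl : Matrix (Fin 2) (Fin 2) ℂ)
    (hr : IsQuat Hr) (hl : IsQuat Hl) :
    let Ad : Matrix Half Half ℂ := dgB
        (liftI (diagI fun I =>
          odB (mconj (kdiag kν ke ku kd I) * Hrᴴ) (Hr * kdiag kν ke ku kd I)))
        (liftI (diagI fun I =>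
          odB (mconj (kdiag kν ke ku kd I) * Hlᴴ) (Hl * kdiag kν ke ku kd I)))
    let AY : Matrix Full Full ℂ := dgB Ad (0 : Matrix Half Half ℂ)
    Jconj AY = dgB (0 : Matrix Half Half ℂ) (mconj Ad) ∧
    g5DY kν ke ku kd + AY + Jconj AY
      = dgB (etaD (D0 kν ke ku kd) + Ad) (etaD ((D0 kν ke ku kd)ᴴ) + mconj Ad) ∧
    (g5DY kν ke ku kd + AY + Jconj AY).IsHermitian :=
  statement7_general kν ke ku kd Hr Hl

end TwistSM
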